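/- Let G = (V, E) be a directed graph with distinguished vertices s, t ∈ V such that every vertex of G lies on some walk from s to t. If for every natural number ℓ there is at most one walk of length ℓ from s to t (i.e., the underlying unary automaton is unambiguous), then |E| ≤ 12·|V|. -/

import Mathlib

/-- A walk from `u` to `v` in a directed graph with edge set `E`, represented by its
(nonempty) list of visited vertices: it starts at `u`, ends at `v`, and consecutive
vertices are joined by edges. Its length is `l.length - 1`. -/
def IsWalk {V : Type*} (E : Set (V × V)) (u v : V) (l : List V) : Prop :=
  l.head? = some u ∧ l.getLast? = some v ∧ l.Chain' (fun a b => (a, b) ∈ E)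

/-!
Write `a v` and `b v` for the lengths of shortest walks `s → v` and `v → t`; both are below
`|V|`. Gluing shortest walks to an edge `(u, v)` gives a walk `s → t` of length
`a u + b v + 1`, so by unambiguity all edges of one level `a u + b v < 2|V|` lie on one common
walk, where they are told apart by `a u`. Hence each level has a unique edge of least `a u`
(its leader), and there are at most `2|V|` leaders. Any other edge `(u, v)` of the level lies
on the common walk behind an edge `(u', v')` with `a u' < a u`, that is, on a shortest walk
`v' → t`; this forces `b u = b v + 1`. So such an edge is determined by its source `u`, and
there are at most `|V|` of them: `|E| ≤ 3|V|`.
-/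

section

variable {V : Type*} {E : Set (V × V)} {s t x y z u v : V} {l l' : List V}

namespace IsWalk

lemma ne_nil (h : IsWalk E x y l) : l ≠ [] := by
  rintro rfl; simp [IsWalk] at h

lemma append (h : IsWalk E x u l) (he : (u, v) ∈ E) (h' : IsWalk E v y l') :
    IsWalk E x y (l ++ l') := by
  obtain ⟨hx, hu, hl⟩ := h
  obtain ⟨hv, hy, hl'⟩ := h'
  refine ⟨?_, ?_, List.IsChain.append hl hl' ?_⟩
  · rwa [List.head?_append_of_ne_nil _ (by rintro rfl; simp at hx)]
  · rwa [List.getLast?_append_of_ne_nil _ (by rintro rfl; simp at hv)]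
  · simpa [hu, hv] using he

lemma append_tail (h : IsWalk E x y l) (h' : IsWalk E y z l') : IsWalk E x z (l ++ l'.tail) := by
  obtain ⟨hy, hz, hl'⟩ := h'
  match l', hy, hz, hl' with
  | [w], hy, hz, _ =>
    obtain rfl : y = z := by simp_all
    simpa using h
  | w :: w' :: r, hy, hz, hl' =>
    obtain rfl : w = y := by simpa using hy
    exact h.append (List.isChain_cons_cons.mp hl').1
      ⟨rfl, by simpa using hz, (List.isChain_cons_cons.mp hl').2⟩

lemma take (h : IsWalk E x y l) {d : ℕ} (hd : d < l.length) :
    IsWalk E x l[d] (l.take (d + 1)) := by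
  obtain ⟨hx, -, hl⟩ := h
  refine ⟨?_, ?_, hl.take _⟩
  · rwa [List.head?_take, if_neg (by omega)]
  · rw [List.take_add_one, List.getElem?_eq_getElem hd, Option.toList_some, List.getLast?_concat]

lemma drop (h : IsWalk E x y l) {d : ℕ} (hd : d < l.length) :
    IsWalk E l[d] y (l.drop d) := by
  obtain ⟨-, hy, hl⟩ := h
  refine ⟨?_, ?_, hl.drop _⟩
  · rw [List.head?_drop, List.getElem?_eq_getElem hd]
  · rwa [List.getLast?_drop, if_neg (by omega)]

lemma segment (h : IsWalk E x y l) {i j : ℕ} (hu : l[i]? = some u) (hv : l[j]? = some v)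
    (hij : i ≤ j) : IsWalk E u v ((l.drop i).take (j - i + 1)) := by
  obtain ⟨hi, rfl⟩ := List.getElem?_eq_some_iff.mp hu
  obtain ⟨hj, rfl⟩ := List.getElem?_eq_some_iff.mp hv
  have := (h.drop hi).take (d := j - i) (by rw [List.length_drop]; omega)
  simpa [Nat.add_sub_cancel' hij] using this

end IsWalk

/-- The number of edges of a shortest walk from `x` to `y` (junk value `0` if there is none). -/
noncomputable def walkDist (E : Set (V × V)) (x y : V) : ℕ :=
  sInf {k | ∃ l, IsWalk E x y l ∧ l.length = k + 1}

lemma IsWalk.walkDist_lt_length (h : IsWalk E x y l) : walkDist E x y < l.length := by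
  have hpos := List.length_pos_iff.mpr h.ne_nil
  have : walkDist E x y ≤ l.length - 1 := Nat.sInf_le ⟨l, h, by omega⟩
  omega

lemma IsWalk.exists_length_eq_walkDist (h : IsWalk E x y l) :
    ∃ l, IsWalk E x y l ∧ l.length = walkDist E x y + 1 := by
  unfold walkDist
  have hpos := List.length_pos_iff.mpr h.ne_nil
  exact Nat.sInf_mem (s := {k | ∃ l, IsWalk E x y l ∧ l.length = k + 1})
    ⟨l.length - 1, l, h, by omega⟩

lemma IsWalk.nodup_of_length_eq_walkDist (h : IsWalk E x y l)
    (hl : l.length = walkDist E x y + 1) : l.Nodup := by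
  by_contra hdup
  obtain ⟨i, j, hij, hj, hij'⟩ : ∃ i j, i < j ∧ j < l.length ∧ l[i]? = l[j]? := by
    simpa [List.nodup_iff_getElem?_ne_getElem?] using hdup
  have hi : i < l.length := hij.trans hj
  have heq : l[i] = l[j] := by
    rwa [List.getElem?_eq_getElem hi, List.getElem?_eq_getElem hj, Option.some_inj] at hij'
  have hshort := ((h.take hi).append_tail (heq ▸ h.drop hj)).walkDist_lt_length
  simp only [List.length_append, List.length_take, List.length_tail, List.length_drop] at hshort
  omega

lemma IsWalk.walkDist_lt_card [Fintype V] (h : IsWalk E x y l) :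
    walkDist E x y < Fintype.card V := by
  obtain ⟨l', hl', hlen⟩ := h.exists_length_eq_walkDist
  have := (hl'.nodup_of_length_eq_walkDist hlen).length_le_card
  omega

lemma walkDist_triangle (h : IsWalk E x y l) (h' : IsWalk E y z l') :
    walkDist E x z ≤ walkDist E x y + walkDist E y z := by
  obtain ⟨m, hm, hmlen⟩ := h.exists_length_eq_walkDist
  obtain ⟨m', hm', hm'len⟩ := h'.exists_length_eq_walkDist
  have := (hm.append_tail hm').walkDist_lt_length
  simp only [List.length_append, List.length_tail] at this
  omega

lemma isWalk_pair (he : (x, y) ∈ E) : IsWalk E x y [x, y] :=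
  ⟨rfl, rfl, List.isChain_pair.mpr he⟩

def IsTrim (E : Set (V × V)) (s t : V) : Prop :=
  ∀ v, ∃ l, IsWalk E s t l ∧ v ∈ l

def IsUnambiguous (E : Set (V × V)) (s t : V) : Prop :=
  ∀ l₁ l₂, IsWalk E s t l₁ → IsWalk E s t l₂ → l₁.length = l₂.length → l₁ = l₂

lemma IsTrim.exists_isWalk (hT : IsTrim E s t) (v : V) :
    (∃ l, IsWalk E s v l) ∧ ∃ l, IsWalk E v t l := by
  obtain ⟨l, hl, hv⟩ := hT v
  obtain ⟨d, hd, rfl⟩ := List.mem_iff_getElem.mp hv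
  exact ⟨⟨_, hl.take hd⟩, ⟨_, hl.drop hd⟩⟩

noncomputable def edgeLevel (E : Set (V × V)) (s t : V) (e : V × V) : ℕ :=
  walkDist E s e.1 + walkDist E e.2 t

lemma IsTrim.edgeLevel_lt [Fintype V] (hT : IsTrim E s t) (e : V × V) :
    edgeLevel E s t e < 2 * Fintype.card V := by
  obtain ⟨⟨_, hs⟩, -⟩ := hT.exists_isWalk e.1
  obtain ⟨-, ⟨_, ht⟩⟩ := hT.exists_isWalk e.2
  have := hs.walkDist_lt_card
  have := ht.walkDist_lt_card
  unfold edgeLevel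
  omega

lemma IsTrim.exists_isWalk_through (hT : IsTrim E s t) {e : V × V} (he : e ∈ E) :
    ∃ W, IsWalk E s t W ∧ W.length = edgeLevel E s t e + 2 ∧
      W[walkDist E s e.1]? = some e.1 ∧ W[walkDist E s e.1 + 1]? = some e.2 := by
  obtain ⟨P, hP, hPlen⟩ := (hT.exists_isWalk e.1).1.choose_spec.exists_length_eq_walkDist
  obtain ⟨Q, hQ, hQlen⟩ := (hT.exists_isWalk e.2).2.choose_spec.exists_length_eq_walkDist
  refine ⟨P ++ Q, hP.append he hQ, ?_, ?_, ?_⟩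
  · rw [List.length_append, hPlen, hQlen, edgeLevel]
    omega
  · rw [List.getElem?_append_left (by omega), ← hP.2.1, List.getLast?_eq_getElem?, hPlen]
    rfl
  · rw [List.getElem?_append_right (by omega), hPlen, Nat.sub_self, ← List.head?_eq_getElem?,
      hQ.1]

lemma IsUnambiguous.eq_of_edgeLevel_eq (hU : IsUnambiguous E s t) (hT : IsTrim E s t)
    {e e' : V × V} (he : e ∈ E) (he' : e' ∈ E) (hlevel : edgeLevel E s t e = edgeLevel E s t e')
    (hdist : walkDist E s e.1 = walkDist E s e'.1) : e = e' := by
  obtain ⟨W, hW, hWlen, hWu, hWv⟩ := hT.exists_isWalk_through he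
  obtain ⟨W', hW', hW'len, hW'u, hW'v⟩ := hT.exists_isWalk_through he'
  obtain rfl : W = W' := hU W W' hW hW' (by omega)
  rw [hdist] at hWu hWv
  exact Prod.ext (Option.some.inj (hWu.symm.trans hW'u)) (Option.some.inj (hWv.symm.trans hW'v))

def IsLevelLeader (E : Set (V × V)) (s t : V) (e : V × V) : Prop :=
  ∀ e' ∈ E, edgeLevel E s t e' = edgeLevel E s t e → walkDist E s e.1 ≤ walkDist E s e'.1

lemma IsUnambiguous.walkDist_fst_eq_of_not_isLevelLeader (hU : IsUnambiguous E s t)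
    (hT : IsTrim E s t) (he : (u, v) ∈ E) (hlead : ¬IsLevelLeader E s t (u, v)) :
    walkDist E u t = walkDist E v t + 1 := by
  simp only [IsLevelLeader, not_forall, not_le] at hlead
  obtain ⟨⟨u', v'⟩, he', hlevel, hlt⟩ := hlead
  obtain ⟨W, hW, hWlen, hWu, -⟩ := hT.exists_isWalk_through he
  obtain ⟨W', hW', hW'len, -, hW'v'⟩ := hT.exists_isWalk_through he'
  dsimp only at hlt hWu hW'v'
  obtain rfl : W = W' := hU W W' hW hW' (by omega)
  have hseg := hW.segment hW'v' hWu (by omega)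
  have hv'u := hseg.walkDist_lt_length
  rw [List.length_take, List.length_drop] at hv'u
  have hv't := walkDist_triangle hseg (hT.exists_isWalk u).2.choose_spec
  have huv : walkDist E u v < 2 := (isWalk_pair he).walkDist_lt_length
  have hut := walkDist_triangle (isWalk_pair he) (hT.exists_isWalk v).2.choose_spec
  simp only [edgeLevel] at hlevel hWlen
  -- `b v' ≤ (a u - a u' - 1) + b u`, while equal levels give `b v' = (a u - a u') + b v`
  omega

lemma IsUnambiguous.injOn_edgeLevel (hU : IsUnambiguous E s t) (hT : IsTrim E s t) :
    Set.InjOn (edgeLevel E s t) {e ∈ E | IsLevelLeader E s t e} := by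
  rintro e ⟨he, hlead⟩ e' ⟨he', hlead'⟩ hlevel
  exact hU.eq_of_edgeLevel_eq hT he he' hlevel
    (le_antisymm (hlead e' he' hlevel.symm) (hlead' e he hlevel))

lemma IsUnambiguous.injOn_fst (hU : IsUnambiguous E s t) (hT : IsTrim E s t) :
    Set.InjOn Prod.fst {e ∈ E | ¬IsLevelLeader E s t e} := by
  rintro ⟨u, v⟩ ⟨he, hlead⟩ ⟨u', v'⟩ ⟨he', hlead'⟩ (rfl : u = u')
  have := hU.walkDist_fst_eq_of_not_isLevelLeader hT he hlead
  have := hU.walkDist_fst_eq_of_not_isLevelLeader hT he' hlead'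
  exact hU.eq_of_edgeLevel_eq hT he he' (by simp only [edgeLevel]; omega) rfl

end

/-- Let `G = (V, E)` be a directed graph with distinguished vertices
`s, t` such that every vertex lies on some walk from `s` to `t`. If for every `ℓ` there is
at most one walk of length `ℓ` from `s` to `t` (the underlying unary automaton is
unambiguous), then `|E| ≤ 12·|V|`. -/
theorem card_edges_le_of_unambiguous {V : Type*} [Fintype V] (E : Finset (V × V)) (s t : V)
    (htrim : ∀ v : V, ∃ l : List V, IsWalk (↑E : Set (V × V)) s t l ∧ v ∈ l)
    (hunamb : ∀ l₁ l₂ : List V, IsWalk (↑E : Set (V × V)) s t l₁ →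
      IsWalk (↑E : Set (V × V)) s t l₂ → l₁.length = l₂.length → l₁ = l₂) :
    E.card ≤ 12 * Fintype.card V := by
  classical
  have hT : IsTrim (↑E : Set (V × V)) s t := htrim
  have hU : IsUnambiguous (↑E : Set (V × V)) s t := hunamb
  have hleaders : (E.filter (IsLevelLeader (↑E) s t)).card ≤ 2 * Fintype.card V := by
    simpa using Finset.card_le_card_of_injOn (t := Finset.range (2 * Fintype.card V)) _
      (fun e _ => Finset.mem_range.mpr (hT.edgeLevel_lt e)) (by simpa using hU.injOn_edgeLevel hT)
  have hothers : (E.filter (¬IsLevelLeader (↑E) s t ·)).card ≤ Fintype.card V := by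
    simpa using Finset.card_le_card_of_injOn (t := Finset.univ) _
      (fun e _ => Finset.mem_univ e.1) (by simpa using hU.injOn_fst hT)
  have := Finset.card_filter_add_card_filter_not (s := E) (IsLevelLeader (↑E) s t)
  omega
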